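/- In the simple pursuit game in ℝ² with pursuer speed G_P, evader speed G_E, G_P > G_E, and capture radius γ, the evader moving in the constant direction directly away from the pursuer's initial position guarantees that capture time is at least (d - γ)/(G_P + G_E) for any pursuer strategy, where d is the initial distance; combined with pure pursuit against a straight-fleeing evader, the optimal capture time when the evader flees optimally is exactly q = (d - γ)/(G_P - G_E). -/

import Mathlib

/-! Put `e := (zE0 - zP0) / d`, a unit vector: the fleeing evader and the pure pursuer both move
on the line `zP0 + ℝ e`. The fleeing evader is at distance `d + GE t` from `zP0` at time `t`,
whereas a pursuer of speed `GP` is within `GP t` of it; capture at time `t` therefore forces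
`d + GE t ≤ GP t + γ`, i.e. `t ≥ (d - γ) / (GP - GE) ≥ (d - γ) / (GP + GE)`. Under pure pursuit
the distance is `|d - (GP - GE) t|`, so the capture times form an interval whose least element
is `(d - γ) / (GP - GE)`. -/

lemma dist_add_smul_add_smul {E : Type*} [SeminormedAddCommGroup E] [NormedSpace ℝ E]
    (p u : E) (a b : ℝ) : dist (p + a • u) (p + b • u) = |a - b| * ‖u‖ := by
  rw [dist_add_left, dist_eq_norm, ← sub_smul, norm_smul, Real.norm_eq_abs]

lemma sub_le_sub_mul_of_dist_le {α : Type*} [PseudoMetricSpace α] {p x y : α}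
    {vP vE d γ t : ℝ} (hx : dist p x ≤ vP * t) (hy : d + vE * t ≤ dist p y)
    (hxy : dist x y ≤ γ) : d - γ ≤ (vP - vE) * t := by
  rw [sub_mul]
  linarith [dist_triangle p x y]

lemma isLeast_setOf_abs_sub_mul_le {c γ d : ℝ} (hc : 0 < c) (hγ : 0 ≤ γ) (hγd : γ ≤ d) :
    IsLeast {t : ℝ | 0 ≤ t ∧ |d - c * t| ≤ γ} ((d - γ) / c) := by
  refine ⟨⟨div_nonneg (by linarith) hc.le, ?_⟩, fun t ⟨_, ht⟩ => ?_⟩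
  · rw [mul_div_cancel₀ _ hc.ne', sub_sub_cancel, abs_of_nonneg hγ]
  · rw [div_le_iff₀' hc]
    linarith [le_abs_self (d - c * t)]

/-- In the simple pursuit game with speeds `GP > GE` and capture radius `γ`,
(a) the evader fleeing in the constant direction directly away from the pursuer's
initial position guarantees capture time at least `(d - γ)/(GP + GE)` against any
pursuer trajectory with speed at most `GP`;
(b) against this straight-fleeing evader, the pure-pursuit (straight-line) pursuer
captures, and the infimum of capture times is exactly `q = (d - γ)/(GP - GE)`. -/
theorem pursuit_capture_time_bounds
    (GP GE γ d : ℝ) (hGE : 0 < GE) (hG : GE < GP) (hγ : 0 < γ) (hdγ : γ < d)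
    (zP0 zE0 : EuclideanSpace ℝ (Fin 2)) (hd : dist zP0 zE0 = d)
    -- the evader's straight-fleeing trajectory, away from the pursuer's initial position
    (zE : ℝ → EuclideanSpace ℝ (Fin 2))
    (hzE : ∀ t, zE t = zE0 + (GE * t) • (d⁻¹ • (zE0 - zP0)))
    -- the pure-pursuit pursuer's trajectory (chasing along the line of centers)
    (zPstar : ℝ → EuclideanSpace ℝ (Fin 2))
    (hzPstar : ∀ t, zPstar t = zP0 + (GP * t) • (d⁻¹ • (zE0 - zP0))) :
    -- (a) lower bound against any pursuer of speed at most GP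
    (∀ zP : ℝ → EuclideanSpace ℝ (Fin 2), zP 0 = zP0 →
      (∀ s t : ℝ, dist (zP s) (zP t) ≤ GP * |s - t|) →
      ∀ t ≥ (0 : ℝ), dist (zP t) (zE t) ≤ γ → (d - γ) / (GP + GE) ≤ t) ∧
    -- (b) exact capture time for pure pursuit against the straight-fleeing evader
    sInf {t : ℝ | 0 ≤ t ∧ dist (zPstar t) (zE t) ≤ γ} = (d - γ) / (GP - GE) := by
  have hd0 : 0 < d := hγ.trans hdγ
  set e := d⁻¹ • (zE0 - zP0) with he_def
  have he : ‖e‖ = 1 := by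
    rw [norm_smul, ← dist_eq_norm, dist_comm, hd, Real.norm_eq_abs, abs_inv, abs_of_pos hd0,
      inv_mul_cancel₀ hd0.ne']
  have hzE' : ∀ t, zE t = zP0 + (d + GE * t) • e := by
    intro t
    rw [hzE, add_smul, he_def, smul_inv_smul₀ hd0.ne']
    abel
  refine ⟨fun zP hzP0 hLip t ht hcap => ?_, ?_⟩
  · have hP : dist zP0 (zP t) ≤ GP * t := by
      simpa [hzP0, abs_of_nonneg ht] using hLip 0 t
    have hE : d + GE * t ≤ dist zP0 (zE t) := by
      rw [hzE', dist_self_add_right, norm_smul, he, mul_one, Real.norm_eq_abs,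
        abs_of_nonneg (by positivity)]
    rw [div_le_iff₀' (by linarith)]
    calc d - γ ≤ (GP - GE) * t := sub_le_sub_mul_of_dist_le hP hE hcap
      _ ≤ (GP + GE) * t := by gcongr; linarith
  · have hdist : ∀ t, dist (zPstar t) (zE t) = |d - (GP - GE) * t| := by
      intro t
      rw [hzPstar, hzE', dist_add_smul_add_smul, he, mul_one, abs_sub_comm]
      ring_nf
    simp_rw [hdist]
    exact (isLeast_setOf_abs_sub_mul_le (sub_pos.2 hG) hγ.le hdγ.le).csInf_eq
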